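/- arXiv:2505.00405 — 4 statements merged into one kernel-verified Lean document; each statement's English description precedes it below -/
import Mathlib

section
/- (Necessity of monotonicity) Suppose the allocation I : [0,1] → [−1,1] and transfer t : [0,1] → ℝ satisfy the incentive compatibility condition δ(I(v), v) − t(v) ≥ δ(I(b), v) − t(b) for all v, b ∈ [0,1], where δ(I, v) = 1 − max(v, 1−v) − I·(1{I ≥ 0} − v). Then I is non-decreasing on [0, 1/2) and non-decreasing on (1/2, 1]. -/
/-- Necessity of monotonicity: incentive compatibility implies the
allocation is non-decreasing on [0, 1/2) and on (1/2, 1]. -/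
theorem ic_implies_monotone_allocation
    (I t : ℝ → ℝ)
    (hIrange : ∀ v ∈ Set.Icc (0:ℝ) 1, I v ∈ Set.Icc (-1:ℝ) 1)
    (hIC : ∀ v ∈ Set.Icc (0:ℝ) 1, ∀ b ∈ Set.Icc (0:ℝ) 1,
      (1 - max v (1 - v) - I v * ((if 0 ≤ I v then 1 else 0) - v)) - t v ≥
      (1 - max v (1 - v) - I b * ((if 0 ≤ I b then 1 else 0) - v)) - t b) :
    MonotoneOn I (Set.Ico (0:ℝ) (1/2)) ∧ MonotoneOn I (Set.Ioc (1/2 : ℝ) 1) := by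
  have key : MonotoneOn I (Set.Icc (0:ℝ) 1) := by
    intro a ha b hb hab
    rcases eq_or_lt_of_le hab with h | h
    · exact le_of_eq (congrArg I h)
    · have h1 := hIC a ha b hb
      have h2 := hIC b hb a ha
      set χa := (if 0 ≤ I a then (1:ℝ) else 0) with hχa
      set χb := (if 0 ≤ I b then (1:ℝ) else 0) with hχb
      nlinarith [h1, h2, h]
  constructor
  · exact key.mono (fun x hx => ⟨hx.1, le_trans hx.2.le (by norm_num)⟩)
  · exact key.mono (fun x hx => ⟨le_trans (by norm_num) hx.1.le, hx.2⟩)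
end

section
/- (Envelope transfer formula) For an incentive-compatible, individually rational direct mechanism with allocation I : [0,1] → [−1,1] non-decreasing, ∫₀¹ I(z)dz = 0, and zero rent at the boundary types (Δ(0) = Δ(1) = 0), the transfer satisfies t(v_b) = I(v_b)·(v_b − 1{I(v_b) ≥ 0}) − ∫₀^{v_b} I(z)dz for every v_b ∈ [0,1]. -/
/-- Envelope transfer formula: for an incentive-compatible,
individually rational mechanism with non-decreasing allocation, zero integral, and
zero rent at the boundary types, the transfer is pinned down by the envelope formula. -/
theorem envelope_transfer_formula
    (I t : ℝ → ℝ)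
    (hIrange : ∀ v ∈ Set.Icc (0:ℝ) 1, I v ∈ Set.Icc (-1:ℝ) 1)
    (hImono : MonotoneOn I (Set.Icc (0:ℝ) 1))
    (hIint : ∫ z in (0:ℝ)..1, I z = 0)
    (hIC : ∀ v ∈ Set.Icc (0:ℝ) 1, ∀ b ∈ Set.Icc (0:ℝ) 1,
      (1 - max v (1 - v) - I v * ((if 0 ≤ I v then 1 else 0) - v)) - t v ≥
      (1 - max v (1 - v) - I b * ((if 0 ≤ I b then 1 else 0) - v)) - t b)
    (hIR : ∀ v ∈ Set.Icc (0:ℝ) 1,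
      (1 - max v (1 - v) - I v * ((if 0 ≤ I v then 1 else 0) - v)) - t v ≥ 0)
    (hΔ0 : (1 - max (0:ℝ) (1 - 0) - I 0 * ((if 0 ≤ I 0 then 1 else 0) - 0)) - t 0 = 0)
    (hΔ1 : (1 - max (1:ℝ) (1 - 1) - I 1 * ((if 0 ≤ I 1 then 1 else 0) - 1)) - t 1 = 0) :
    ∀ vb ∈ Set.Icc (0:ℝ) 1,
      t vb = I vb * (vb - (if 0 ≤ I vb then 1 else 0)) - ∫ z in (0:ℝ)..vb, I z := by
  classical
  intro vb hvb
  set F : ℝ → ℝ := fun v => I v * (v - (if 0 ≤ I v then 1 else 0)) - t v with hFdef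
  have key : ∀ a ∈ Set.Icc (0:ℝ) 1, ∀ b ∈ Set.Icc (0:ℝ) 1,
      I b * (a - b) ≤ F a - F b := by
    intro a ha b hb
    have h := hIC a ha b hb
    simp only [hFdef]
    nlinarith [h]
  have hF0 : F 0 = 0 := by
    simp only [hFdef]
    norm_num at hΔ0 ⊢
    nlinarith [hΔ0]
  obtain ⟨hv0, hv1⟩ := hvb
  have main : (∫ z in (0:ℝ)..vb, I z) = F vb - F 0 := by
    set d := (∫ z in (0:ℝ)..vb, I z) - (F vb - F 0) with hd
    have hbound : ∀ n : ℕ, |d| ≤ 2 * vb / (n+1) := by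
      intro n
      set N := n + 1 with hN
      have hNpos : (0:ℝ) < (N:ℝ) := by exact_mod_cast Nat.succ_pos n
      set δ := vb / N with hδ
      have hδ0 : 0 ≤ δ := by positivity
      set z : ℕ → ℝ := fun k => k * δ with hz
      have hzs : ∀ k : ℕ, z (k+1) - z k = δ := by
        intro k; simp only [hz]; push_cast; ring
      have hzle : ∀ k : ℕ, z k ≤ z (k+1) := by
        intro k; have := hzs k; linarith
      have hzmem : ∀ k : ℕ, k ≤ N → z k ∈ Set.Icc (0:ℝ) 1 := by
        intro k hk
        constructor
        · simp only [hz]; positivity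
        · have h1 : z k ≤ (N:ℝ) * δ := by
            simp only [hz]
            apply mul_le_mul_of_nonneg_right _ hδ0
            exact_mod_cast hk
          have h2 : (N:ℝ) * δ = vb := by
            rw [hδ]; field_simp
          linarith
      have hzN : z N = vb := by
        simp only [hz, hδ]; field_simp
      have hz0 : z 0 = 0 := by simp [hz]
      have hsub : ∀ k, k < N → Set.uIcc (z k) (z (k+1)) ⊆ Set.Icc (0:ℝ) 1 := by
        intro k hk
        rw [Set.uIcc_of_le (hzle k)]
        intro x hx
        exact ⟨le_trans (hzmem k hk.le).1 hx.1, le_trans hx.2 (hzmem (k+1) hk).2⟩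
      have hint : ∀ k, k < N → IntervalIntegrable I MeasureTheory.volume (z k) (z (k+1)) :=
        fun k hk => (hImono.mono (hsub k hk)).intervalIntegrable
      have hsumF : ∑ k ∈ Finset.range N, (F (z (k+1)) - F (z k)) = F vb - F 0 := by
        rw [Finset.sum_range_sub (fun k => F (z k)) N, hzN, hz0]
      have hsumI : ∑ k ∈ Finset.range N, (∫ x in z k..z (k+1), I x)
          = ∫ x in (0:ℝ)..vb, I x := by
        rw [intervalIntegral.sum_integral_adjacent_intervals hint, hzN, hz0]
      have hFlb : ∀ k ∈ Finset.range N, I (z k) * δ ≤ F (z (k+1)) - F (z k) := by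
        intro k hk
        rw [Finset.mem_range] at hk
        have h := key (z (k+1)) (hzmem (k+1) hk) (z k) (hzmem k hk.le)
        rw [hzs k] at h
        exact h
      have hFub : ∀ k ∈ Finset.range N, F (z (k+1)) - F (z k) ≤ I (z (k+1)) * δ := by
        intro k hk
        rw [Finset.mem_range] at hk
        have h := key (z k) (hzmem k hk.le) (z (k+1)) (hzmem (k+1) hk)
        have h2 : z k - z (k+1) = -δ := by have := hzs k; linarith
        rw [h2, mul_neg] at h
        linarith
      have hIlb : ∀ k ∈ Finset.range N, I (z k) * δ ≤ ∫ x in z k..z (k+1), I x := by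
        intro k hk
        rw [Finset.mem_range] at hk
        have hmono : ∀ x ∈ Set.Icc (z k) (z (k+1)), I (z k) ≤ I x := by
          intro x hx
          have hxm : x ∈ Set.Icc (0:ℝ) 1 :=
            (hsub k hk) (by rw [Set.uIcc_of_le (hzle k)]; exact hx)
          exact hImono (hzmem k hk.le) hxm hx.1
        have h := intervalIntegral.integral_mono_on (hzle k)
          intervalIntegrable_const (hint k hk) hmono
        have hconst : (∫ _x in z k..z (k+1), I (z k)) = δ * I (z k) := by
          rw [intervalIntegral.integral_const, smul_eq_mul, hzs k]
        rw [hconst] at h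
        linarith
      have hIub : ∀ k ∈ Finset.range N, (∫ x in z k..z (k+1), I x) ≤ I (z (k+1)) * δ := by
        intro k hk
        rw [Finset.mem_range] at hk
        have hmono : ∀ x ∈ Set.Icc (z k) (z (k+1)), I x ≤ I (z (k+1)) := by
          intro x hx
          have hxm : x ∈ Set.Icc (0:ℝ) 1 :=
            (hsub k hk) (by rw [Set.uIcc_of_le (hzle k)]; exact hx)
          exact hImono hxm (hzmem (k+1) hk) hx.2
        have h := intervalIntegral.integral_mono_on (hzle k)
          (hint k hk) intervalIntegrable_const hmono
        have hconst : (∫ _x in z k..z (k+1), I (z (k+1))) = δ * I (z (k+1)) := by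
          rw [intervalIntegral.integral_const, smul_eq_mul, hzs k]
        rw [hconst] at h
        linarith
      have hA : ∑ k ∈ Finset.range N, I (z k) * δ ≤ F vb - F 0 :=
        hsumF ▸ Finset.sum_le_sum hFlb
      have hB : F vb - F 0 ≤ ∑ k ∈ Finset.range N, I (z (k+1)) * δ :=
        hsumF ▸ Finset.sum_le_sum hFub
      have hA' : ∑ k ∈ Finset.range N, I (z k) * δ ≤ ∫ x in (0:ℝ)..vb, I x :=
        hsumI ▸ Finset.sum_le_sum hIlb
      have hB' : (∫ x in (0:ℝ)..vb, I x) ≤ ∑ k ∈ Finset.range N, I (z (k+1)) * δ :=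
        hsumI ▸ Finset.sum_le_sum hIub
      have hdiff : (∑ k ∈ Finset.range N, I (z (k+1)) * δ)
          - ∑ k ∈ Finset.range N, I (z k) * δ = I (z N) * δ - I (z 0) * δ := by
        rw [← Finset.sum_sub_distrib]
        exact Finset.sum_range_sub (fun k => I (z k) * δ) N
      have hIvb := hIrange vb ⟨hv0, hv1⟩
      have hI0 := hIrange 0 (by norm_num)
      have hdiff2 : (∑ k ∈ Finset.range N, I (z (k+1)) * δ)
          - ∑ k ∈ Finset.range N, I (z k) * δ ≤ 2 * δ := by
        rw [hdiff, hzN, hz0]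
        nlinarith [hIvb.2, hI0.1, hδ0]
      have habs : |d| ≤ 2 * δ := by
        rw [abs_le]
        constructor
        · simp only [hd]; linarith
        · simp only [hd]; linarith
      have : 2 * δ = 2 * vb / (n+1) := by
        rw [hδ, hN]; push_cast; ring
      linarith
    have hd0 : d = 0 := by
      by_contra hne
      have hpos : 0 < |d| := abs_pos.2 hne
      obtain ⟨n, hn⟩ := exists_nat_gt (2 * vb / |d|)
      have h1 := hbound n
      have h2 : 2 * vb / (n+1) < |d| := by
        rw [div_lt_iff₀ (by positivity)]
        calc 2 * vb = (2 * vb / |d|) * |d| := by field_simp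
          _ < ((n:ℝ)+1) * |d| := by
              apply mul_lt_mul_of_pos_right _ hpos
              linarith
          _ = |d| * ((n:ℝ)+1) := mul_comm _ _
      linarith
    have : (∫ z in (0:ℝ)..vb, I z) - (F vb - F 0) = 0 := hd0
    linarith
  have hfinal : (∫ z in (0:ℝ)..vb, I z) = F vb := by rw [main, hF0]; ring
  simp only [hFdef] at hfinal
  linarith
end

section
/- (Sufficiency) Let I : [0,1] → [−1,1] be non-decreasing with ∫₀¹ I(z)dz = 0, and define t(v) = I(v)·(v − 1{I(v) ≥ 0}) − ∫₀^v I(z)dz. Then the mechanism (I, t) is incentive compatible and individually rational: for all v, b ∈ [0,1], δ(I(v), v) − t(v) ≥ max(0, δ(I(b), v) − t(b)), where δ(I, v) = 1 − max(v, 1−v) − I·(1{I ≥ 0} − v). -/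
/-- Sufficiency: a non-decreasing allocation with zero integral and
envelope transfers yields an incentive compatible and individually rational mechanism. -/
theorem monotone_allocation_implies_ic_and_ir
    (I : ℝ → ℝ)
    (hIrange : ∀ v ∈ Set.Icc (0:ℝ) 1, I v ∈ Set.Icc (-1:ℝ) 1)
    (hImono : MonotoneOn I (Set.Icc (0:ℝ) 1))
    (hIint : ∫ z in (0:ℝ)..1, I z = 0)
    (t : ℝ → ℝ)
    (ht : ∀ v ∈ Set.Icc (0:ℝ) 1,
      t v = I v * (v - (if 0 ≤ I v then 1 else 0)) - ∫ z in (0:ℝ)..v, I z) :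
    ∀ v ∈ Set.Icc (0:ℝ) 1, ∀ b ∈ Set.Icc (0:ℝ) 1,
      (1 - max v (1 - v) - I v * ((if 0 ≤ I v then 1 else 0) - v)) - t v ≥
      max 0 ((1 - max v (1 - v) - I b * ((if 0 ≤ I b then 1 else 0) - v)) - t b) := by
  intro v hv b hb
  have h01 : (0:ℝ) ≤ 1 := by norm_num
  have hsub : ∀ x ∈ Set.Icc (0:ℝ) 1, ∀ y ∈ Set.Icc (0:ℝ) 1,
      Set.uIcc x y ⊆ Set.Icc (0:ℝ) 1 := by
    intro x hx y hy
    rw [← Set.uIcc_of_le h01]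
    exact Set.uIcc_subset_uIcc (by rwa [Set.uIcc_of_le h01]) (by rwa [Set.uIcc_of_le h01])
  have hInt : ∀ x ∈ Set.Icc (0:ℝ) 1, ∀ y ∈ Set.Icc (0:ℝ) 1,
      IntervalIntegrable I MeasureTheory.volume x y := fun x hx y hy =>
    (hImono.mono (hsub x hx y hy)).intervalIntegrable
  have h0 : (0:ℝ) ∈ Set.Icc (0:ℝ) 1 := by norm_num
  have h1 : (1:ℝ) ∈ Set.Icc (0:ℝ) 1 := by norm_num
  -- bounds for IR
  have hA1 : -v ≤ ∫ z in (0:ℝ)..v, I z := by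
    have := intervalIntegral.integral_mono_on (μ := MeasureTheory.volume) hv.1
      (intervalIntegrable_const (c := (-1:ℝ))) (hInt 0 h0 v hv)
      (fun x hx => (hIrange x ⟨hx.1, le_trans hx.2 hv.2⟩).1)
    simpa using this
  have hA2 : (∫ z in v..(1:ℝ), I z) ≤ 1 - v := by
    have := intervalIntegral.integral_mono_on (μ := MeasureTheory.volume) hv.2
      (hInt v hv 1 h1) (intervalIntegrable_const (c := (1:ℝ)))
      (fun x hx => (hIrange x ⟨le_trans hv.1 hx.1, hx.2⟩).2)
    simpa using this
  have hsplit : (∫ z in (0:ℝ)..v, I z) + ∫ z in v..(1:ℝ), I z = 0 := by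
    rw [intervalIntegral.integral_add_adjacent_intervals (hInt 0 h0 v hv) (hInt v hv 1 h1)]
    exact hIint
  -- simplified payoffs
  have eX : (1 - max v (1 - v) - I v * ((if 0 ≤ I v then 1 else 0) - v)) - t v
      = 1 - max v (1 - v) + ∫ z in (0:ℝ)..v, I z := by
    rw [ht v hv]; ring
  have eY : (1 - max v (1 - v) - I b * ((if 0 ≤ I b then 1 else 0) - v)) - t b
      = 1 - max v (1 - v) + I b * (v - b) + ∫ z in (0:ℝ)..b, I z := by
    rw [ht b hb]; ring
  rw [eX, ge_iff_le, eY]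
  apply max_le
  · -- IR
    rcases max_cases v (1 - v) with ⟨h, h'⟩ | ⟨h, h'⟩ <;> rw [h] <;> linarith
  · -- IC
    rcases le_total b v with hbv | hvb
    · have hle : I b * (v - b) ≤ ∫ z in b..v, I z := by
        have := intervalIntegral.integral_mono_on (μ := MeasureTheory.volume) hbv
          (intervalIntegrable_const (c := I b)) (hInt b hb v hv)
          (fun x hx => hImono hb ⟨le_trans hb.1 hx.1, le_trans hx.2 hv.2⟩ hx.1)
        simpa [mul_comm] using this
      have hadd : (∫ z in (0:ℝ)..b, I z) + ∫ z in b..v, I z = ∫ z in (0:ℝ)..v, I z :=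
        intervalIntegral.integral_add_adjacent_intervals (hInt 0 h0 b hb) (hInt b hb v hv)
      linarith
    · have hle : (∫ z in v..b, I z) ≤ I b * (b - v) := by
        have := intervalIntegral.integral_mono_on (μ := MeasureTheory.volume) hvb
          (hInt v hv b hb) (intervalIntegrable_const (c := I b))
          (fun x hx => hImono ⟨le_trans hv.1 hx.1, le_trans hx.2 hb.2⟩ hb hx.2)
        simpa [mul_comm] using this
      have hadd : (∫ z in (0:ℝ)..v, I z) + ∫ z in v..b, I z = ∫ z in (0:ℝ)..b, I z :=
        intervalIntegral.integral_add_adjacent_intervals (hInt 0 h0 v hv) (hInt v hv b hb)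
      have hneg : I b * (v - b) = -(I b * (b - v)) := by ring
      linarith
end

section
/- For uniform types, seller belief v_s ∈ [0,1] with v_s ≠ 1/2, and τ < (1−2v_s)^{−2}, set λ* = (π⁻(1/2) + π⁺(1/2))/2 where π⁻(v) = 2v + τ v_s(1−2v_s) and π⁺(v) = 2v + τ(1−v_s)(1−2v_s) − 1. Then the allocation I*(v) = −1 if π⁻(v) < λ*, I*(v) = 0 if π⁺(v) < λ* < π⁻(v), and I*(v) = 1 if π⁺(v) > λ*, is non-decreasing in v and satisfies ∫₀¹ I*(v)dv = 0. -/
/-- For uniform types and τ < (1−2v_s)⁻², the threshold allocation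
defined by λ* = (π⁻(1/2) + π⁺(1/2))/2 is non-decreasing and integrates to zero. -/
theorem uniform_optimal_allocation_monotone_and_zero_integral
    (τ vs : ℝ) (hτ : 0 ≤ τ) (hvs0 : 0 ≤ vs) (hvs1 : vs ≤ 1) (hvs : vs ≠ 1/2)
    (hτub : τ < ((1 - 2 * vs) ^ 2)⁻¹) :
    (let πm : ℝ → ℝ := fun v => 2 * v + τ * vs * (1 - 2 * vs);
     let πp : ℝ → ℝ := fun v => 2 * v + τ * (1 - vs) * (1 - 2 * vs) - 1;
     let lam : ℝ := (πm (1/2) + πp (1/2)) / 2;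
     let Istar : ℝ → ℝ := fun v =>
       if πm v < lam then -1 else if lam < πp v then 1 else 0;
     MonotoneOn Istar (Set.Icc (0:ℝ) 1) ∧ ∫ v in (0:ℝ)..1, Istar v = 0) := by
  intro πm πp lam Istar
  have hπm : πm = fun v => 2 * v + τ * vs * (1 - 2 * vs) := rfl
  have hπp : πp = fun v => 2 * v + τ * (1 - vs) * (1 - 2 * vs) - 1 := rfl
  have hlam : lam = (πm (1/2) + πp (1/2)) / 2 := rfl
  have hIdef : Istar = fun v =>
      if πm v < lam then -1 else if lam < πp v then 1 else 0 := rfl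
  set a : ℝ := (1 + τ * (1 - 2*vs)^2)/4 with ha
  set b : ℝ := (3 - τ * (1 - 2*vs)^2)/4 with hb
  have hsne : (1 - 2*vs) ≠ 0 := by
    intro h; apply hvs; linarith
  have hs : 0 < (1 - 2*vs)^2 := by positivity
  have ht0 : 0 ≤ τ * (1 - 2*vs)^2 := mul_nonneg hτ hs.le
  have ht1 : τ * (1 - 2*vs)^2 < 1 := by
    have h1 := mul_lt_mul_of_pos_right hτub hs
    rwa [inv_mul_cancel₀ (ne_of_gt hs)] at h1
  have hab : a < b := by rw [ha, hb]; linarith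
  have ha0 : (0:ℝ) ≤ a := by rw [ha]; linarith
  have hb1 : b ≤ 1 := by rw [hb]; linarith
  have hlam2 : lam = ((2 * (1/2) + τ * vs * (1 - 2 * vs)) +
      (2 * (1/2) + τ * (1 - vs) * (1 - 2 * vs) - 1)) / 2 := rfl
  have hmA : ∀ v : ℝ, πm v < lam ↔ v < a := by
    intro v
    have key : πm v - lam = 2 * (v - a) := by
      simp only [hπm, hlam2, ha]; ring
    constructor <;> intro h <;> linarith
  have hpB : ∀ v : ℝ, lam < πp v ↔ b < v := by
    intro v
    have key : πp v - lam = 2 * (v - b) := by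
      simp only [hπp, hlam2, hb]; ring
    constructor <;> intro h <;> linarith
  set g : ℝ → ℝ := fun v => if v < a then (-1:ℝ) else if b < v then 1 else 0 with hg
  have hfg : Istar = g := by
    funext v
    rw [hIdef]
    simp only [hmA v, hpB v, hg]
  have hgmono : Monotone g := by
    intro x y hxy
    simp only [hg]
    split_ifs <;> linarith
  have hint : ∀ c d : ℝ, IntervalIntegrable g MeasureTheory.volume c d :=
    fun c d => hgmono.intervalIntegrable
  constructor
  · rw [hfg]; exact hgmono.monotoneOn _
  · rw [hfg]
    have hae : ∀ᵐ x : ℝ, x ≠ a := by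
      rw [MeasureTheory.ae_iff]
      have : {x : ℝ | ¬ x ≠ a} = {a} := by ext x; simp
      rw [this]
      exact MeasureTheory.measure_singleton a
    have h1 : ∫ v in (0:ℝ)..a, g v = -a := by
      rw [intervalIntegral.integral_congr_ae (g := fun _ => (-1:ℝ)) ?_]
      · simp
      · filter_upwards [hae] with x hxne hx
        rw [Set.uIoc_of_le ha0] at hx
        have hxa : x < a := lt_of_le_of_ne hx.2 hxne
        simp [hg, hxa]
    have h2 : ∫ v in a..b, g v = 0 := by
      rw [intervalIntegral.integral_congr (g := fun _ => (0:ℝ)) ?_]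
      · simp
      · intro x hx
        rw [Set.uIcc_of_le hab.le] at hx
        simp [hg, not_lt.2 hx.1, not_lt.2 hx.2]
    have h3 : ∫ v in b..(1:ℝ), g v = 1 - b := by
      rw [intervalIntegral.integral_congr_ae (g := fun _ => (1:ℝ)) ?_]
      · simp
      · apply MeasureTheory.ae_of_all
        intro x hx
        rw [Set.uIoc_of_le hb1] at hx
        have hbx : b < x := hx.1
        have hxa : ¬ x < a := by push_neg; linarith
        simp [hg, hxa, hbx]
    have hsplit1 : ∫ v in (0:ℝ)..1, g v
        = (∫ v in (0:ℝ)..a, g v) + ∫ v in a..(1:ℝ), g v :=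
      (intervalIntegral.integral_add_adjacent_intervals (hint 0 a) (hint a 1)).symm
    have hsplit2 : ∫ v in a..(1:ℝ), g v
        = (∫ v in a..b, g v) + ∫ v in b..(1:ℝ), g v :=
      (intervalIntegral.integral_add_adjacent_intervals (hint a b) (hint b 1)).symm
    have hab1 : a + b = 1 := by rw [ha, hb]; ring
    rw [hsplit1, hsplit2, h1, h2, h3]
    linarith
end
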